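/- arXiv:2504.09999 — 3 statements merged into one kernel-verified Lean document; each statement's English description precedes it below -/
import Mathlib

section
/- Let σ_1, …, σ_s be nonnegative real numbers with ∑_{i=1}^s σ_i ≤ 1, and set T_1 = ∑_{i=1}^s σ_i², T_2 = ∑_{i=1}^s σ_i⁴, and S = ∑_{1 ≤ i < j ≤ s} σ_i σ_j. Then for every real number a > 0, (a·S − T_1)² ≥ (T_1² − T_2)·a²/2 + (T_1² − T_1)·a + T_1². -/
private lemma sq_sum_eq_aux (s : ℕ) (f : Fin s → ℝ) :
    (∑ i, f i) ^ 2 = ∑ i, f i ^ 2 + 2 * ∑ i, ∑ j ∈ Finset.Ioi i, f i * f j := by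
  have hsplit : ∀ g : Fin s → ℝ, ∀ i : Fin s,
      ∑ j, g j = (∑ j ∈ Finset.Iio i, g j) + g i + ∑ j ∈ Finset.Ioi i, g j := by
    intro g i
    have huniv : (Finset.univ : Finset (Fin s)) = Finset.Iio i ∪ Finset.Ici i := by
      ext x; simp [lt_or_ge x i]
    have hdisj : Disjoint (Finset.Iio i) (Finset.Ici i) := by
      simp [Finset.disjoint_left]
    rw [show (∑ j, g j) = ∑ j ∈ Finset.Iio i ∪ Finset.Ici i, g j by rw [← huniv],
      Finset.sum_union hdisj, Finset.Ici_eq_cons_Ioi, Finset.sum_cons, add_assoc]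
  have hswap : ∑ i, ∑ j ∈ Finset.Iio i, f i * f j = ∑ i, ∑ j ∈ Finset.Ioi i, f i * f j := by
    rw [Finset.sum_comm' (t' := Finset.univ) (s' := fun y => Finset.Ioi y)
      (by intro x y; simp [Finset.mem_Iio, Finset.mem_Ioi])]
    exact Finset.sum_congr rfl fun i _ => Finset.sum_congr rfl fun j _ => mul_comm _ _
  calc (∑ i, f i) ^ 2 = ∑ i, f i * ∑ j, f j := by
        rw [sq, Finset.sum_mul]
    _ = ∑ i, ((∑ j ∈ Finset.Iio i, f i * f j) + f i * f i
          + ∑ j ∈ Finset.Ioi i, f i * f j) := by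
        refine Finset.sum_congr rfl fun i _ => ?_
        rw [Finset.mul_sum, hsplit (fun j => f i * f j) i]
    _ = ∑ i, f i ^ 2 + 2 * ∑ i, ∑ j ∈ Finset.Ioi i, f i * f j := by
        rw [Finset.sum_add_distrib, Finset.sum_add_distrib, hswap]
        simp [sq]; ring

/-- For nonnegative σ_i with ∑ σ_i ≤ 1, T_1 = ∑ σ_i², T_2 = ∑ σ_i⁴,
S = ∑_{i<j} σ_i σ_j, and any a > 0:
(a·S − T_1)² ≥ (T_1² − T_2)·a²/2 + (T_1² − T_1)·a + T_1². -/
theorem realignment_ineq_eleven (s : ℕ) (σ : Fin s → ℝ)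
    (hσ : ∀ i, 0 ≤ σ i) (hsum : ∑ i, σ i ≤ 1)
    (T₁ T₂ S : ℝ)
    (hT₁ : T₁ = ∑ i, σ i ^ 2) (hT₂ : T₂ = ∑ i, σ i ^ 4)
    (hS : S = ∑ i, ∑ j ∈ Finset.Ioi i, σ i * σ j) :
    ∀ a : ℝ, 0 < a →
      (T₁ ^ 2 - T₂) * a ^ 2 / 2 + (T₁ ^ 2 - T₁) * a + T₁ ^ 2 ≤ (a * S - T₁) ^ 2 := by
  intro a ha
  set S₂ : ℝ := ∑ i, ∑ j ∈ Finset.Ioi i, σ i ^ 2 * σ j ^ 2 with hS₂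
  have hP : (∑ i, σ i) ^ 2 = T₁ + 2 * S := by
    rw [hT₁, hS]; exact sq_sum_eq_aux s σ
  have hT : T₁ ^ 2 = T₂ + 2 * S₂ := by
    rw [hT₁, hT₂, hS₂]
    have := sq_sum_eq_aux s (fun i => σ i ^ 2)
    simpa [← pow_mul] using this
  have hT₁0 : 0 ≤ T₁ := hT₁ ▸ Finset.sum_nonneg fun i _ => sq_nonneg _
  have hS0 : 0 ≤ S := hS ▸ Finset.sum_nonneg fun i _ =>
    Finset.sum_nonneg fun j _ => mul_nonneg (hσ i) (hσ j)
  -- S₂ ≤ S ^ 2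
  have hS₂S : S₂ ≤ S ^ 2 := by
    have h1 : S₂ = ∑ p ∈ Finset.univ.sigma fun i => Finset.Ioi i, (σ p.1 * σ p.2) ^ 2 := by
      rw [hS₂, Finset.sum_sigma]
      exact Finset.sum_congr rfl fun i _ => Finset.sum_congr rfl fun j _ => by ring
    have h2 : S = ∑ p ∈ Finset.univ.sigma fun i => Finset.Ioi i, σ p.1 * σ p.2 := by
      rw [hS, Finset.sum_sigma]
    rw [h1, h2]
    exact Finset.sum_sq_le_sq_sum_of_nonneg fun p _ => mul_nonneg (hσ _) (hσ _)
  -- T₁ + 2S ≤ 1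
  have hP1 : T₁ + 2 * S ≤ 1 := by
    rw [← hP]
    have h0 : 0 ≤ ∑ i, σ i := Finset.sum_nonneg fun i _ => hσ i
    nlinarith
  have key1 : (T₁ ^ 2 - T₂) * a ^ 2 / 2 ≤ a ^ 2 * S ^ 2 := by
    have : T₁ ^ 2 - T₂ = 2 * S₂ := by linarith
    rw [this]
    have := sq_nonneg a
    nlinarith
  have key2 : (T₁ ^ 2 - T₁) * a ≤ -2 * a * S * T₁ := by
    have h : T₁ ^ 2 - T₁ ≤ -2 * S * T₁ := by nlinarith
    nlinarith
  nlinarith [key1, key2]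
end

section
/- Let σ_1, …, σ_s be nonnegative real numbers with N := ∑_{i=1}^s σ_i ≤ 1, and set T_1 = ∑_{i=1}^s σ_i² and T_2 = ∑_{i=1}^s σ_i⁴. Then for every real number a > 0, ((a/2)·N² − (1 + a/2)·T_1)² ≥ (T_1² − T_2)·a²/2 + (T_1² − T_1)·a + T_1². -/
open Finset

lemma sq_sum_decomp {s : ℕ} (f : Fin s → ℝ) :
    (∑ i, f i) ^ 2 = ∑ i, f i ^ 2 + ∑ p ∈ (univ : Finset (Fin s)).offDiag, f p.1 * f p.2 := by
  rw [sq, Finset.sum_mul_sum, ← Finset.sum_product', ← Finset.diag_union_offDiag,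
    Finset.sum_union (Finset.disjoint_diag_offDiag _), Finset.sum_diag]
  simp [sq]

lemma offdiag_key {s : ℕ} (σ : Fin s → ℝ) (hσ : ∀ i, 0 ≤ σ i) :
    2 * ∑ p ∈ (univ : Finset (Fin s)).offDiag, (σ p.1) ^ 2 * (σ p.2) ^ 2 ≤
      (∑ p ∈ (univ : Finset (Fin s)).offDiag, σ p.1 * σ p.2) ^ 2 := by
  set S := (univ : Finset (Fin s)).offDiag with hS
  set A := ∑ p ∈ S, σ p.1 * σ p.2 with hA
  have hx : ∀ p : Fin s × Fin s, 0 ≤ σ p.1 * σ p.2 := fun p => mul_nonneg (hσ _) (hσ _)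
  have hbound : ∀ p ∈ S, 2 * (σ p.1 * σ p.2) ≤ A := by
    intro p hp
    have hne : p.1 ≠ p.2 := (Finset.mem_offDiag.mp hp).2.2
    have hswap : p.swap ∈ S := by
      simp only [hS, Finset.mem_offDiag] at hp ⊢
      exact ⟨by simp, by simp, fun h => hne (by simpa using h.symm)⟩
    have hpair : p ≠ p.swap := by
      intro h
      exact hne (congrArg Prod.snd h ▸ rfl)
    have : ∑ q ∈ ({p, p.swap} : Finset (Fin s × Fin s)), σ q.1 * σ q.2 ≤ A := by
      apply Finset.sum_le_sum_of_subset_of_nonneg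
      · intro q hq
        simp only [Finset.mem_insert, Finset.mem_singleton] at hq
        rcases hq with rfl | rfl
        · exact hp
        · exact hswap
      · intro q _ _; exact hx q
    rw [Finset.sum_pair hpair] at this
    simp only [Prod.fst_swap, Prod.snd_swap] at this
    linarith [this, mul_comm (σ p.2) (σ p.1)]
  have : ∑ p ∈ S, 2 * ((σ p.1) ^ 2 * (σ p.2) ^ 2) ≤ ∑ p ∈ S, (σ p.1 * σ p.2) * A := by
    apply Finset.sum_le_sum
    intro p hp
    have := mul_le_mul_of_nonneg_left (hbound p hp) (hx p)
    calc 2 * ((σ p.1) ^ 2 * (σ p.2) ^ 2) = (σ p.1 * σ p.2) * (2 * (σ p.1 * σ p.2)) := by ring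
      _ ≤ (σ p.1 * σ p.2) * A := this
  rw [← Finset.sum_mul] at this
  rw [Finset.mul_sum]
  nlinarith [this]

/-- For nonnegative σ_i with N = ∑ σ_i ≤ 1, T_1 = ∑ σ_i², T_2 = ∑ σ_i⁴,
and any a > 0:
((a/2)·N² − (1 + a/2)·T_1)² ≥ (T_1² − T_2)·a²/2 + (T_1² − T_1)·a + T_1². -/
theorem realignment_ineq_thirteen (s : ℕ) (σ : Fin s → ℝ)
    (hσ : ∀ i, 0 ≤ σ i)
    (N T₁ T₂ : ℝ)
    (hN : N = ∑ i, σ i) (hNle : N ≤ 1)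
    (hT₁ : T₁ = ∑ i, σ i ^ 2) (hT₂ : T₂ = ∑ i, σ i ^ 4) :
    ∀ a : ℝ, 0 < a →
      (T₁ ^ 2 - T₂) * a ^ 2 / 2 + (T₁ ^ 2 - T₁) * a + T₁ ^ 2 ≤
        (a / 2 * N ^ 2 - (1 + a / 2) * T₁) ^ 2 := by
  intro a ha
  have hN0 : 0 ≤ N := hN ▸ Finset.sum_nonneg fun i _ => hσ i
  have hT₁0 : 0 ≤ T₁ := hT₁ ▸ Finset.sum_nonneg fun i _ => sq_nonneg _
  have hdecN : N ^ 2 = T₁ + ∑ p ∈ (univ : Finset (Fin s)).offDiag, σ p.1 * σ p.2 := by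
    rw [hN, hT₁, sq_sum_decomp]
  have hdecT : T₁ ^ 2 = T₂ + ∑ p ∈ (univ : Finset (Fin s)).offDiag, (σ p.1) ^ 2 * (σ p.2) ^ 2 := by
    rw [hT₁, hT₂, sq_sum_decomp (fun i => σ i ^ 2)]
    ring_nf
  have hkey : 2 * (T₁ ^ 2 - T₂) ≤ (N ^ 2 - T₁) ^ 2 := by
    have := offdiag_key σ hσ
    rw [hdecN, hdecT]
    ring_nf
    nlinarith [this]
  have h1 : 0 ≤ T₁ * (1 - N ^ 2) := by
    apply mul_nonneg hT₁0
    nlinarith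
  nlinarith [mul_nonneg (sq_nonneg a) (by linarith : (0:ℝ) ≤ (N ^ 2 - T₁) ^ 2 - 2 * (T₁ ^ 2 - T₂)),
    mul_nonneg ha.le h1]
end

section
/- Let σ_1, …, σ_t be nonnegative real numbers with ∑_{i=1}^t σ_i ≤ 1, and set T_1^R = ∑_{i=1}^t σ_i² and T_2^R = ∑_{i=1}^t σ_i⁴. Then for every real number v > 0, V_3(v) := √( ( √(T_1^R + (v² + 2v)·T_2^R) − v·√(T_2^R) )² + √( 2((T_1^R)² − T_2^R) ) ) ≤ 1. -/
open Finset

/-- Sum over the off-diagonal of a product of values. -/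
lemma sum_offDiag_eq {t : ℕ} (f : Fin t → ℝ) :
    ∑ p ∈ (Finset.univ : Finset (Fin t)).offDiag, f p.1 * f p.2
      = (∑ i, f i) ^ 2 - ∑ i, f i ^ 2 := by
  have hsplit : ∑ p ∈ (Finset.univ : Finset (Fin t)).diag, f p.1 * f p.2
      + ∑ p ∈ (Finset.univ : Finset (Fin t)).offDiag, f p.1 * f p.2
      = ∑ p ∈ (Finset.univ : Finset (Fin t)) ×ˢ Finset.univ, f p.1 * f p.2 := by
    rw [← Finset.sum_union (Finset.disjoint_diag_offDiag _), Finset.diag_union_offDiag]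
  have hprod : ∑ p ∈ (Finset.univ : Finset (Fin t)) ×ˢ Finset.univ, f p.1 * f p.2
      = (∑ i, f i) ^ 2 := by
    rw [Finset.sum_product, sq, Finset.sum_mul_sum]
  have hdiag : ∑ p ∈ (Finset.univ : Finset (Fin t)).diag, f p.1 * f p.2
      = ∑ i, f i ^ 2 := by
    rw [Finset.sum_diag]
    exact Finset.sum_congr rfl fun i _ => (sq (f i)).symm
  linarith [hsplit, hprod, hdiag]

/-- Symmetric off-diagonal Cauchy-type bound: twice the sum of squares is at most the
square of the sum. -/
lemma two_sum_sq_le_sq_sum {t : ℕ} (a : Fin t → ℝ) (ha : ∀ i, 0 ≤ a i) :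
    2 * ∑ p ∈ (Finset.univ : Finset (Fin t)).offDiag, (a p.1 * a p.2) ^ 2
      ≤ (∑ p ∈ (Finset.univ : Finset (Fin t)).offDiag, a p.1 * a p.2) ^ 2 := by
  set O := (Finset.univ : Finset (Fin t)).offDiag with hO
  have hb : ∀ p ∈ O, 0 ≤ a p.1 * a p.2 := fun p _ => mul_nonneg (ha _) (ha _)
  have hpair : ∀ p ∈ O, a p.1 * a p.2 + a p.2 * a p.1 ≤ ∑ q ∈ O, a q.1 * a q.2 := by
    intro p hp
    have hmem := Finset.mem_offDiag.1 hp
    have hswap : (p.2, p.1) ∈ O := Finset.mem_offDiag.2 ⟨Finset.mem_univ _, Finset.mem_univ _, hmem.2.2.symm⟩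
    have hne : p ≠ (p.2, p.1) := by
      intro h
      exact hmem.2.2 (congrArg Prod.fst h)
    have hsub : ({p, (p.2, p.1)} : Finset (Fin t × Fin t)) ⊆ O := by
      intro q hq
      rcases Finset.mem_insert.1 hq with h | h
      · exact h ▸ hp
      · exact (Finset.mem_singleton.1 h) ▸ hswap
    calc a p.1 * a p.2 + a p.2 * a p.1
        = ∑ q ∈ ({p, (p.2, p.1)} : Finset (Fin t × Fin t)), a q.1 * a q.2 := by
          rw [Finset.sum_pair hne]
      _ ≤ ∑ q ∈ O, a q.1 * a q.2 :=
          Finset.sum_le_sum_of_subset_of_nonneg hsub (fun q hq _ => hb q hq)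
  calc 2 * ∑ p ∈ O, (a p.1 * a p.2) ^ 2
      = ∑ p ∈ O, (a p.1 * a p.2) * (a p.1 * a p.2 + a p.2 * a p.1) := by
        rw [Finset.mul_sum]
        exact Finset.sum_congr rfl fun p _ => by ring
    _ ≤ ∑ p ∈ O, (a p.1 * a p.2) * (∑ q ∈ O, a q.1 * a q.2) :=
        Finset.sum_le_sum fun p hp => mul_le_mul_of_nonneg_left (hpair p hp) (hb p hp)
    _ = (∑ p ∈ O, a p.1 * a p.2) ^ 2 := by rw [← Finset.sum_mul, sq]

/-- The paper's Theorem 3 at the level of the singular values: if the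
nonnegative σ_i satisfy ∑ σ_i ≤ 1, then V_3(v) ≤ 1 for every v > 0. -/
theorem theorem_three (t : ℕ) (σ : Fin t → ℝ)
    (hσ : ∀ i, 0 ≤ σ i) (hsum : ∑ i, σ i ≤ 1)
    (T₁ T₂ : ℝ)
    (hT₁ : T₁ = ∑ i, σ i ^ 2) (hT₂ : T₂ = ∑ i, σ i ^ 4) :
    ∀ v : ℝ, 0 < v →
      Real.sqrt ((Real.sqrt (T₁ + (v ^ 2 + 2 * v) * T₂) - v * Real.sqrt T₂) ^ 2 +
        Real.sqrt (2 * (T₁ ^ 2 - T₂))) ≤ 1 := by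
  intro v hv
  set S := ∑ i, σ i with hS
  have hS0 : 0 ≤ S := Finset.sum_nonneg fun i _ => hσ i
  have hσ1 : ∀ i, σ i ≤ 1 := by
    intro i
    exact le_trans (Finset.single_le_sum (fun j _ => hσ j) (Finset.mem_univ i)) hsum
  have hT₁0 : 0 ≤ T₁ := hT₁ ▸ Finset.sum_nonneg fun i _ => sq_nonneg _
  have hT₂0 : 0 ≤ T₂ := hT₂ ▸ Finset.sum_nonneg fun i _ => by positivity
  have hT₂T₁ : T₂ ≤ T₁ := by
    rw [hT₁, hT₂]
    refine Finset.sum_le_sum fun i _ => ?_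
    have h2 : σ i ^ 2 ≤ 1 := by nlinarith [hσ i, hσ1 i]
    nlinarith [mul_nonneg (sq_nonneg (σ i)) (by linarith : (0:ℝ) ≤ 1 - σ i ^ 2)]
  -- off-diagonal sums
  have hoff1 : ∑ p ∈ (Finset.univ : Finset (Fin t)).offDiag, σ p.1 * σ p.2
      = S ^ 2 - T₁ := by rw [sum_offDiag_eq, hT₁]
  have hoff2 : ∑ p ∈ (Finset.univ : Finset (Fin t)).offDiag, (σ p.1 * σ p.2) ^ 2
      = T₁ ^ 2 - T₂ := by
    have := sum_offDiag_eq (fun i => σ i ^ 2)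
    have h1 : ∀ p : Fin t × Fin t, (σ p.1 * σ p.2) ^ 2 = σ p.1 ^ 2 * σ p.2 ^ 2 :=
      fun p => by ring
    have h2 : ∀ i, (σ i ^ 2) ^ 2 = σ i ^ 4 := fun i => by ring
    simp only [h1, h2] at this ⊢
    rw [this, hT₁, hT₂]
  have hoff_nonneg : 0 ≤ S ^ 2 - T₁ := by
    rw [← hoff1]; exact Finset.sum_nonneg fun p _ => mul_nonneg (hσ _) (hσ _)
  have hkey : 2 * (T₁ ^ 2 - T₂) ≤ (S ^ 2 - T₁) ^ 2 := by
    rw [← hoff1, ← hoff2]; exact two_sum_sq_le_sq_sum σ hσ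
  have hS1 : S ^ 2 ≤ 1 := by nlinarith [hS0, hsum]
  -- bound the first term by T₁
  set u := Real.sqrt (T₁ + (v ^ 2 + 2 * v) * T₂) with hu
  set w := Real.sqrt T₂ with hw
  have hv0 : (0:ℝ) ≤ v ^ 2 + 2 * v := by nlinarith
  have hu0 : 0 ≤ u := Real.sqrt_nonneg _
  have hw0 : 0 ≤ w := Real.sqrt_nonneg _
  have hu2 : u ^ 2 = T₁ + (v ^ 2 + 2 * v) * T₂ :=
    Real.sq_sqrt (add_nonneg hT₁0 (mul_nonneg hv0 hT₂0))
  have hw2 : w ^ 2 = T₂ := Real.sq_sqrt hT₂0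
  have h1 : (v + 1) * w ≤ u := by
    have hsq : ((v + 1) * w) ^ 2 ≤ u ^ 2 := by nlinarith [hw2, hu2, hT₂T₁, hv.le]
    have hnn : 0 ≤ (v + 1) * w := mul_nonneg (by linarith) hw0
    have h := Real.sqrt_le_sqrt hsq
    rwa [Real.sqrt_sq hnn, Real.sqrt_sq hu0] at h
  have hA : (u - v * w) ^ 2 ≤ T₁ := by
    have hmul : v * w * ((v + 1) * w) ≤ v * w * u :=
      mul_le_mul_of_nonneg_left h1 (mul_nonneg hv.le hw0)
    nlinarith [hmul, hu2, hw2]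
  -- bound the second term
  have hB : Real.sqrt (2 * (T₁ ^ 2 - T₂)) ≤ 1 - T₁ := by
    have h1T : 0 ≤ 1 - T₁ := by linarith [hoff_nonneg, hS1]
    have hmono : (S ^ 2 - T₁) ^ 2 ≤ (1 - T₁) ^ 2 := by
      nlinarith [hoff_nonneg, hS1]
    have : 2 * (T₁ ^ 2 - T₂) ≤ (1 - T₁) ^ 2 := le_trans hkey hmono
    calc Real.sqrt (2 * (T₁ ^ 2 - T₂)) ≤ Real.sqrt ((1 - T₁) ^ 2) := Real.sqrt_le_sqrt this
      _ = 1 - T₁ := by rw [Real.sqrt_sq h1T]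
  have hfinal : (u - v * w) ^ 2 + Real.sqrt (2 * (T₁ ^ 2 - T₂)) ≤ 1 := by linarith
  calc Real.sqrt ((u - v * w) ^ 2 + Real.sqrt (2 * (T₁ ^ 2 - T₂)))
      ≤ Real.sqrt 1 := Real.sqrt_le_sqrt hfinal
    _ = 1 := Real.sqrt_one
end
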